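/- If A ∈ ℂ^{N×N} is invertible and M ∈ {0,1}^{N×N} has at least one generalized diagonal of ones (i.e., there exists a permutation σ of {1,…,N} with M_{k,σ(k)} = 1 for all k), then there exists a permutation ρ of {1,…,N} such that A ⊙ (P_ρ M) is invertible, i.e., some row permutation of M yields a mask under which A stays invertible. -/

import Mathlib

/-! Expanding every determinant by the Leibniz formula and summing over the row permutation `ρ`
first gives `∑_ρ det (A ⊙ P_ρ M) = perm M · det A`. For a `0/1` matrix the permanent counts the
generalized diagonals of ones, so it is nonzero; hence some summand `det (A ⊙ P_ρ M)` is nonzero. -/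

noncomputable section

/-- The permutation matrix `P_ρ` with `(P_ρ)_{k,ℓ} = 1` iff `ℓ = ρ(k)`, so that the
`k`-th row of `P_ρ * M` is the `ρ(k)`-th row of `M`. -/
def permMat {N : ℕ} (ρ : Equiv.Perm (Fin N)) : Matrix (Fin N) (Fin N) ℂ :=
  Matrix.of fun k l => if l = ρ k then 1 else 0

open Matrix Equiv Finset

theorem permMat_mul {N : ℕ} (ρ : Perm (Fin N)) (M : Matrix (Fin N) (Fin N) ℂ) :
    permMat ρ * M = M.submatrix ρ id := by
  ext k l
  simp [permMat, mul_apply]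

theorem Matrix.sum_det_hadamard_submatrix {n R : Type*} [Fintype n] [DecidableEq n] [CommRing R]
    (A M : Matrix n n R) :
    ∑ ρ : Perm n, (A ⊙ M.submatrix ρ id).det = M.permanent * A.det := by
  have inner (π : Perm n) :
      ∑ ρ : Perm n, ∏ i, M ((ρ * π) i) i = M.permanent :=
    sum_comp (Equiv.mulRight π) fun μ => ∏ i, M (μ i) i
  simp only [det_apply', hadamard_apply, submatrix_apply, id, prod_mul_distrib]
  rw [sum_comm, mul_sum]
  refine sum_congr rfl fun π _ => ?_
  simp only [← mul_sum, ← Perm.mul_apply, inner]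
  ring

open scoped Classical in
theorem Matrix.permanent_eq_card_of_zero_one {n R : Type*} [Fintype n] [DecidableEq n]
    [CommSemiring R] {M : Matrix n n R} (hM : ∀ k l, M k l = 0 ∨ M k l = 1) :
    M.permanent = #{μ : Perm n | ∀ i, M (μ i) i = 1} := by
  rw [permanent, ← sum_boole]
  refine sum_congr rfl fun μ _ => ?_
  split_ifs with h
  · simp [h]
  · obtain ⟨i, hi⟩ := not_forall.1 h
    exact prod_eq_zero (mem_univ i) ((hM (μ i) i).resolve_right hi)

theorem Matrix.permanent_ne_zero_of_zero_one {n R : Type*} [Fintype n] [DecidableEq n]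
    [CommSemiring R] [CharZero R] {M : Matrix n n R} (hM : ∀ k l, M k l = 0 ∨ M k l = 1)
    {σ : Perm n} (hσ : ∀ k, M k (σ k) = 1) :
    M.permanent ≠ 0 := by
  classical
  have hσ' : σ⁻¹ ∈ ({μ : Perm n | ∀ i, M (μ i) i = 1} : Finset _) := by
    simpa using fun i => by simpa using hσ (σ⁻¹ i)
  rw [permanent_eq_card_of_zero_one hM, Nat.cast_ne_zero]
  exact card_ne_zero_of_mem hσ'

/-- If `A ∈ ℂ^{N×N}` is invertible and the binary matrix
`M ∈ {0,1}^{N×N}` has a generalized diagonal of ones, then there is a permutation `ρ`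
such that `A ⊙ (P_ρ M)` is invertible: some row permutation of `M` yields a mask under
which `A` stays invertible. -/
theorem stmt_5 (N : ℕ) (A M : Matrix (Fin N) (Fin N) ℂ)
    (hA : IsUnit A)
    (hM : ∀ k l, M k l = 0 ∨ M k l = 1)
    (hdiag : ∃ σ : Equiv.Perm (Fin N), ∀ k, M k (σ k) = 1) :
    ∃ ρ : Equiv.Perm (Fin N), IsUnit (Matrix.hadamard A (permMat ρ * M)) := by
  obtain ⟨σ, hσ⟩ := hdiag
  have hsum : ∑ ρ : Perm (Fin N), (A ⊙ M.submatrix ρ id).det ≠ 0 := by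
    rw [sum_det_hadamard_submatrix]
    exact mul_ne_zero (permanent_ne_zero_of_zero_one hM hσ)
      ((isUnit_iff_isUnit_det A).1 hA).ne_zero
  obtain ⟨ρ, -, hρ⟩ := exists_ne_zero_of_sum_ne_zero hsum
  exact ⟨ρ, by rw [permMat_mul, isUnit_iff_isUnit_det, isUnit_iff_ne_zero]; exact hρ⟩
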